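/- arXiv:2402.07336 — 8 statements merged into one kernel-verified Lean document; each statement's English description precedes it below -/
import Mathlib

section
/- For any logic with consequence closure operator Cn, if the conjunction property, disjunction property, weak negation property, and the left-involutive negation property (Cn(φ) ⊆ Cn(¬¬φ) for all φ) hold, then for all formulas φ and ψ, ¬(φ ∧ ψ) ⊢ ¬φ ∨ ¬ψ. -/
/-- with ∧_P, ∨_P, ¬_W, ¬_Il, we have ¬(φ ∧ ψ) ⊢ ¬φ ∨ ¬ψ. -/
theorem stmt_1 {Fm : Type*} (Cn : Set Fm → Set Fm)
    (hext : ∀ Γ : Set Fm, Γ ⊆ Cn Γ)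
    (hmono : ∀ Γ Δ : Set Fm, Γ ⊆ Δ → Cn Γ ⊆ Cn Δ)
    (hidem : ∀ Γ : Set Fm, Cn (Cn Γ) ⊆ Cn Γ)
    (conj disj : Fm → Fm → Fm) (neg : Fm → Fm)
    (hconj : ∀ φ ψ : Fm, Cn {conj φ ψ} = Cn {φ, ψ})
    (hdisj : ∀ φ ψ : Fm, Cn {disj φ ψ} = Cn {φ} ∩ Cn {ψ})
    (hneg : ∀ φ ψ : Fm, ψ ∈ Cn {φ} → neg φ ∈ Cn {neg ψ})
    (hIl : ∀ φ : Fm, Cn {φ} ⊆ Cn {neg (neg φ)}) :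
    ∀ φ ψ : Fm, disj (neg φ) (neg ψ) ∈ Cn {neg (conj φ ψ)} := by
  intro φ ψ
  -- transitivity helper
  have htrans : ∀ a b : Fm, a ∈ Cn {b} → Cn {a} ⊆ Cn {b} := by
    intro a b hab
    have h1 : ({a} : Set Fm) ⊆ Cn {b} := by
      intro x hx; rw [Set.mem_singleton_iff] at hx; subst hx; exact hab
    exact fun x hx => hidem {b} (hmono _ _ h1 hx)
  set D := disj (neg φ) (neg ψ) with hD
  -- D ∈ Cn {neg φ} and D ∈ Cn {neg ψ}
  have hDself : D ∈ Cn {D} := hext _ rfl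
  rw [hdisj] at hDself
  have hD1 : D ∈ Cn {neg φ} := hDself.1
  have hD2 : D ∈ Cn {neg ψ} := hDself.2
  -- ¬¬φ, ¬¬ψ ∈ Cn {¬D}
  have h1 : neg (neg φ) ∈ Cn {neg D} := hneg _ _ hD1
  have h2 : neg (neg ψ) ∈ Cn {neg D} := hneg _ _ hD2
  -- φ, ψ ∈ Cn {¬D}
  have hφ : φ ∈ Cn {neg D} := htrans _ _ h1 (hIl φ (hext _ rfl))
  have hψ : ψ ∈ Cn {neg D} := htrans _ _ h2 (hIl ψ (hext _ rfl))
  -- conj φ ψ ∈ Cn {¬D}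
  have hpair : ({φ, ψ} : Set Fm) ⊆ Cn {neg D} := by
    intro x hx
    rcases hx with h | h
    · subst h; exact hφ
    · rw [Set.mem_singleton_iff] at h; subst h; exact hψ
  have hconjmem : conj φ ψ ∈ Cn {neg D} := by
    have : conj φ ψ ∈ Cn {φ, ψ} := by
      rw [← hconj]; exact hext _ rfl
    exact hidem _ (hmono _ _ hpair this)
  -- weak negation: ¬¬D ∈ Cn {¬(φ∧ψ)}
  have hnnD : neg (neg D) ∈ Cn {neg (conj φ ψ)} := hneg _ _ hconjmem
  -- D ∈ Cn {¬¬D} by hIl, conclude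
  exact htrans _ _ hnnD (hIl D (hext _ rfl))
end

section
/- Let Cn be a consequence closure operator on 𝒫(Fm) with Cn(∅) ≠ ∅, the conjunction property, the bottom property, and a weak negation ¬. Then the following are equivalent: (a) the properties ¬_Ir (Cn({¬¬φ}) ⊆ Cn({φ})), ¬_A (Cn({φ, ¬φ}) = Fm), and ¬_P (¬ψ ∈ Cn({φ, ¬(φ ∧ ψ)})) all hold; (b) for all formulas φ, ψ: φ ∧ ψ ⊢ ⊥ if and only if φ ⊢ ¬ψ. -/
/-- with Cn ∅ ≠ ∅, ∧_P, ⊥_P and ¬_W, the properties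
¬_Ir, ¬_A, ¬_P hold jointly iff (φ ∧ ψ ⊢ ⊥ iff φ ⊢ ¬ψ). -/
theorem stmt_7 {Fm : Type*} (Cn : Set Fm → Set Fm)
    (hext : ∀ Γ : Set Fm, Γ ⊆ Cn Γ)
    (hmono : ∀ Γ Δ : Set Fm, Γ ⊆ Δ → Cn Γ ⊆ Cn Δ)
    (hidem : ∀ Γ : Set Fm, Cn (Cn Γ) ⊆ Cn Γ)
    (conj : Fm → Fm → Fm) (neg : Fm → Fm) (bot : Fm)
    (hne : Cn (∅ : Set Fm) ≠ ∅)
    (hconj : ∀ φ ψ : Fm, Cn {conj φ ψ} = Cn {φ, ψ})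
    (hbot : Cn {bot} = Set.univ)
    (hneg : ∀ φ ψ : Fm, ψ ∈ Cn {φ} → neg φ ∈ Cn {neg ψ}) :
    ((∀ φ : Fm, Cn {neg (neg φ)} ⊆ Cn {φ}) ∧
     (∀ φ : Fm, Cn {φ, neg φ} = Set.univ) ∧
     (∀ φ ψ : Fm, neg ψ ∈ Cn {φ, neg (conj φ ψ)})) ↔
      (∀ φ ψ : Fm, bot ∈ Cn {conj φ ψ} ↔ neg ψ ∈ Cn {φ}) := by
  have hsub : ∀ (S T : Set Fm), T ⊆ Cn S → Cn T ⊆ Cn S := fun S T h =>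
    (hmono T (Cn S) h).trans (hidem S)
  have huniv : ∀ (S : Set Fm), bot ∈ Cn S → Cn S = Set.univ := by
    intro S h
    apply Set.eq_univ_of_univ_subset
    rw [← hbot]
    exact hsub S {bot} (Set.singleton_subset_iff.2 h)
  constructor
  · rintro ⟨hIr, hA, hP⟩ φ ψ
    constructor
    · intro h
      have hu : Cn {conj φ ψ} = Set.univ := huniv _ h
      have h1 : neg φ ∈ Cn {conj φ ψ} := by rw [hu]; trivial
      have h2 : neg (conj φ ψ) ∈ Cn {neg (neg φ)} := hneg _ _ h1
      have h3 : neg (conj φ ψ) ∈ Cn {φ} := hIr φ h2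
      have h4 : Cn {φ, neg (conj φ ψ)} ⊆ Cn {φ} := by
        apply hsub
        intro x hx
        rcases hx with rfl | hx
        · exact hext _ rfl
        · rw [Set.mem_singleton_iff] at hx; subst hx; exact h3
      exact h4 (hP φ ψ)
    · intro h
      rw [hconj]
      have h1 : ({ψ, neg ψ} : Set Fm) ⊆ Cn {φ, ψ} := by
        intro x hx
        rcases hx with rfl | hx
        · exact hext _ (Or.inr rfl)
        · rw [Set.mem_singleton_iff] at hx; subst hx
          exact hmono {φ} {φ, ψ} (fun y hy => Or.inl hy) h
      have h2 := hsub _ _ h1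
      rw [hA ψ] at h2
      exact h2 trivial
  · intro E
    have hA : ∀ φ : Fm, Cn {φ, neg φ} = Set.univ := by
      intro φ
      apply huniv
      rw [Set.pair_comm, ← hconj]
      exact (E (neg φ) φ).2 (hext _ rfl)
    refine ⟨?_, hA, ?_⟩
    · intro φ
      apply hsub
      rw [Set.singleton_subset_iff]
      apply (E φ (neg φ)).1
      rw [hconj, hA]; trivial
    · intro φ ψ
      rw [← hconj]
      apply (E _ ψ).1
      rw [hconj]
      set a := conj φ (neg (conj φ ψ)) with ha_def
      have ha : Cn {a} ⊆ Cn {a, ψ} := hmono _ _ (fun x hx => Or.inl hx)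
      have hφ : φ ∈ Cn {a, ψ} := ha (by rw [ha_def, hconj]; exact hext _ (Or.inl rfl))
      have hn : neg (conj φ ψ) ∈ Cn {a, ψ} := ha (by rw [ha_def, hconj]; exact hext _ (Or.inr rfl))
      have hψ : ψ ∈ Cn {a, ψ} := hext _ (Or.inr rfl)
      have hcps : conj φ ψ ∈ Cn {a, ψ} := by
        have hsub2 : Cn {φ, ψ} ⊆ Cn {a, ψ} := hsub _ _ (by
          intro x hx
          rcases hx with rfl | hx
          · exact hφ
          · rw [Set.mem_singleton_iff] at hx; subst hx; exact hψ)
        exact hsub2 (by rw [← hconj]; exact hext _ rfl)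
      have hfin : Cn {conj φ ψ, neg (conj φ ψ)} ⊆ Cn {a, ψ} := hsub _ _ (by
        intro x hx
        rcases hx with rfl | hx
        · exact hcps
        · rw [Set.mem_singleton_iff] at hx; subst hx; exact hn)
      rw [hA] at hfin
      exact hfin trivial
end

section
/- Let Cn be a consequence closure operator with the conjunction property, the strong disjunction property, and a weak negation ¬ satisfying the left-involutive property (Cn({φ}) ⊆ Cn({¬¬φ})) and the absurd negation property (Cn({φ, ¬φ}) = Fm). Then the pseudo negation property holds: ¬ψ ∈ Cn({φ, ¬(φ ∧ ψ)}) for all formulas φ, ψ. -/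
/-- with ∧_P, ∨_S, ¬_W, ¬_Il and ¬_A, the pseudo negation
property ¬_P holds. -/
theorem stmt_8 {Fm : Type*} (Cn : Set Fm → Set Fm)
    (hext : ∀ Γ : Set Fm, Γ ⊆ Cn Γ)
    (hmono : ∀ Γ Δ : Set Fm, Γ ⊆ Δ → Cn Γ ⊆ Cn Δ)
    (hidem : ∀ Γ : Set Fm, Cn (Cn Γ) ⊆ Cn Γ)
    (conj disj : Fm → Fm → Fm) (neg : Fm → Fm)
    (hconj : ∀ φ ψ : Fm, Cn {conj φ ψ} = Cn {φ, ψ})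
    (hsdisj : ∀ (Γ : Set Fm) (φ ψ : Fm),
      Cn (Γ ∪ {disj φ ψ}) = Cn (Γ ∪ {φ}) ∩ Cn (Γ ∪ {ψ}))
    (hneg : ∀ φ ψ : Fm, ψ ∈ Cn {φ} → neg φ ∈ Cn {neg ψ})
    (hIl : ∀ φ : Fm, Cn {φ} ⊆ Cn {neg (neg φ)})
    (hA : ∀ φ : Fm, Cn {φ, neg φ} = Set.univ) :
    ∀ φ ψ : Fm, neg ψ ∈ Cn {φ, neg (conj φ ψ)} := by
  intro φ ψ
  -- absorption: if A ⊆ Cn B then Cn A ⊆ Cn B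
  have habs : ∀ {A B : Set Fm}, A ⊆ Cn B → Cn A ⊆ Cn B :=
    fun {A B} h => (hmono A (Cn B) h).trans (hidem B)
  -- double negation elimination
  have hdne : ∀ χ : Fm, χ ∈ Cn {neg (neg χ)} :=
    fun χ => hIl χ (hext {χ} rfl)
  set m := disj (neg φ) (neg ψ) with hm
  -- disjunction introduction: m from ¬φ and from ¬ψ
  have h1 : m ∈ Cn {neg φ} := by
    have hmem : m ∈ Cn ({neg φ} ∪ {m}) := hext _ (Or.inr rfl)
    rw [hm, hsdisj {neg φ} (neg φ) (neg ψ)] at hmem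
    simpa using hmem.1
  have h2 : m ∈ Cn {neg ψ} := by
    have hmem : m ∈ Cn ({neg ψ} ∪ {m}) := hext _ (Or.inr rfl)
    rw [hm, hsdisj {neg ψ} (neg φ) (neg ψ)] at hmem
    simpa using hmem.2
  -- ¬m ⊢ φ, ¬m ⊢ ψ
  have h3 : φ ∈ Cn {neg m} :=
    habs (Set.singleton_subset_iff.2 (hneg (neg φ) m h1)) (hdne φ)
  have h4 : ψ ∈ Cn {neg m} :=
    habs (Set.singleton_subset_iff.2 (hneg (neg ψ) m h2)) (hdne ψ)
  -- ¬m ⊢ φ ∧ ψ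
  have h5 : conj φ ψ ∈ Cn {neg m} := by
    have hc : conj φ ψ ∈ Cn {φ, ψ} := by
      rw [← hconj]; exact hext _ rfl
    refine habs ?_ hc
    intro x hx
    rcases hx with h | h
    · exact h ▸ h3
    · exact h ▸ h4
  -- De Morgan: ¬(φ∧ψ) ⊢ m
  have h6 : m ∈ Cn {neg (conj φ ψ)} :=
    habs (Set.singleton_subset_iff.2 (hneg (neg m) (conj φ ψ) h5)) (hdne m)
  set Γ : Set Fm := {φ, neg (conj φ ψ)} with hΓ
  have h7 : m ∈ Cn Γ :=
    hmono {neg (conj φ ψ)} Γ (Set.singleton_subset_iff.2 (Or.inr rfl)) h6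
  -- case split on m over Γ
  have h9 : Cn (Γ ∪ {neg φ}) = Set.univ := by
    apply Set.eq_univ_of_univ_subset
    rw [← hA φ]
    apply hmono
    intro x hx
    rcases hx with h | h
    · exact Or.inl (Or.inl h)
    · exact Or.inr (h ▸ rfl)
  have h10 : neg ψ ∈ Cn (Γ ∪ {m}) := by
    rw [hm, hsdisj Γ (neg φ) (neg ψ)]
    exact ⟨by rw [h9]; trivial, hext _ (Or.inr rfl)⟩
  have h11 : Cn (Γ ∪ {m}) ⊆ Cn Γ :=
    habs (Set.union_subset (hext Γ) (Set.singleton_subset_iff.2 h7))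
  exact h11 h10
end

section
/- Let Cn be a consequence closure operator with the disjunction property and a binary operation ⌄ (coimplication). Then the coimplication property (χ ∈ Cn({φ ⌄ ψ}) iff Cn({χ}) ∩ Cn({ψ}) ⊆ Cn({φ}) for all φ, ψ, χ) holds if and only if for all formulas φ, ψ, χ: φ ⌄ ψ ⊢ χ iff φ ⊢ χ ∨ ψ. -/
/-- with ∨_P, the coimplication property holds iff
(φ ⌄ ψ ⊢ χ iff φ ⊢ χ ∨ ψ). -/
theorem stmt_9 {Fm : Type*} (Cn : Set Fm → Set Fm)
    (hext : ∀ Γ : Set Fm, Γ ⊆ Cn Γ)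
    (hmono : ∀ Γ Δ : Set Fm, Γ ⊆ Δ → Cn Γ ⊆ Cn Δ)
    (hidem : ∀ Γ : Set Fm, Cn (Cn Γ) ⊆ Cn Γ)
    (disj coimp : Fm → Fm → Fm)
    (hdisj : ∀ φ ψ : Fm, Cn {disj φ ψ} = Cn {φ} ∩ Cn {ψ}) :
    (∀ φ ψ χ : Fm, χ ∈ Cn {coimp φ ψ} ↔ Cn {χ} ∩ Cn {ψ} ⊆ Cn {φ}) ↔
      (∀ φ ψ χ : Fm, χ ∈ Cn {coimp φ ψ} ↔ disj χ ψ ∈ Cn {φ}) := by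
  have hmem : ∀ α β : Fm, α ∈ Cn {β} ↔ Cn {α} ⊆ Cn {β} := by
    intro α β
    constructor
    · intro h
      exact fun x hx => hidem {β} (hmono {α} (Cn {β}) (Set.singleton_subset_iff.mpr h) hx)
    · intro h
      exact h (hext {α} rfl)
  have key : ∀ φ ψ χ : Fm, (Cn {χ} ∩ Cn {ψ} ⊆ Cn {φ}) ↔ disj χ ψ ∈ Cn {φ} := by
    intro φ ψ χ
    rw [hmem, hdisj]
  constructor
  · intro h φ ψ χ
    rw [h, key]
  · intro h φ ψ χ
    rw [h, ← key]
end

section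
/- Let Cn be a consequence closure operator with Cn(∅) ≠ ∅, the bottom property, a weak negation ¬ satisfying the right-involutive property (Cn({¬¬φ}) ⊆ Cn({φ})), the conjunction property, and the pseudo negation property (¬ψ ∈ Cn({φ, ¬(φ ∧ ψ)})). Then the strong negation property holds: Cn({φ, ψ}) = Fm implies ¬ψ ∈ Cn({φ}). -/
/-- with Cn ∅ ≠ ∅, ⊥_P, ¬_W, ¬_Ir, ∧_P and ¬_P,
the strong negation property ¬_S holds. -/
theorem stmt_10 {Fm : Type*} (Cn : Set Fm → Set Fm)
    (hext : ∀ Γ : Set Fm, Γ ⊆ Cn Γ)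
    (hmono : ∀ Γ Δ : Set Fm, Γ ⊆ Δ → Cn Γ ⊆ Cn Δ)
    (hidem : ∀ Γ : Set Fm, Cn (Cn Γ) ⊆ Cn Γ)
    (conj : Fm → Fm → Fm) (neg : Fm → Fm) (bot : Fm)
    (hne : Cn (∅ : Set Fm) ≠ ∅)
    (hbot : Cn {bot} = Set.univ)
    (hneg : ∀ φ ψ : Fm, ψ ∈ Cn {φ} → neg φ ∈ Cn {neg ψ})
    (hIr : ∀ φ : Fm, Cn {neg (neg φ)} ⊆ Cn {φ})
    (hconj : ∀ φ ψ : Fm, Cn {conj φ ψ} = Cn {φ, ψ})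
    (hP : ∀ φ ψ : Fm, neg ψ ∈ Cn {φ, neg (conj φ ψ)}) :
    ∀ φ ψ : Fm, Cn {φ, ψ} = Set.univ → neg ψ ∈ Cn {φ} := by
  intro φ ψ huniv
  obtain ⟨χ, hχ⟩ := Set.nonempty_iff_ne_empty.mpr hne
  -- neg χ ∈ Cn {conj φ ψ} since that set is univ
  have h1 : neg χ ∈ Cn {conj φ ψ} := by
    rw [hconj, huniv]; trivial
  -- weak negation: neg (conj φ ψ) ∈ Cn {neg (neg χ)}
  have h2 : neg (conj φ ψ) ∈ Cn {neg (neg χ)} := hneg _ _ h1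
  have h3 : neg (conj φ ψ) ∈ Cn {χ} := hIr χ h2
  -- χ ∈ Cn {φ}
  have hχφ : χ ∈ Cn {φ} := hmono ∅ {φ} (Set.empty_subset _) hχ
  have h4 : neg (conj φ ψ) ∈ Cn {φ} := by
    apply hidem {φ}
    exact hmono {χ} (Cn {φ}) (by simpa using hχφ) h3
  -- pseudo negation
  have h5 : neg ψ ∈ Cn {φ, neg (conj φ ψ)} := hP φ ψ
  apply hidem {φ}
  refine hmono _ (Cn {φ}) ?_ h5
  intro x hx
  rcases hx with rfl | rfl
  · exact hext _ rfl
  · exact h4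
end

section
/- Let N be a normative system (a binary relation on formulas) on a logic with consequence closure operator Cn, and define the negative permission system P_N := {(α, φ) | for all ψ, (α, ψ) ∈ N implies Cn({φ, ψ}) ≠ Fm}. If the logic has a strong negation (Cn({φ,ψ}) = Fm implies ¬ψ ∈ Cn({φ})), an absurd negation (Cn({φ, ¬φ}) = Fm), and N is closed under the rule (WO) (if (α, φ) ∈ N and φ ⊢ ψ then (α, ψ) ∈ N), then P_N = {(α, φ) | (α, ¬φ) ∉ N}. -/
/-- with ¬_S, ¬_A, and N closed under (WO),
P_N = {(α, φ) | (α, ¬φ) ∉ N}. -/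
theorem stmt_14 {Fm : Type*} (Cn : Set Fm → Set Fm)
    (hext : ∀ Γ : Set Fm, Γ ⊆ Cn Γ)
    (hmono : ∀ Γ Δ : Set Fm, Γ ⊆ Δ → Cn Γ ⊆ Cn Δ)
    (hidem : ∀ Γ : Set Fm, Cn (Cn Γ) ⊆ Cn Γ)
    (neg : Fm → Fm) (N : Set (Fm × Fm))
    (hneg : ∀ φ ψ : Fm, ψ ∈ Cn {φ} → neg φ ∈ Cn {neg ψ})
    (hS : ∀ φ ψ : Fm, Cn {φ, ψ} = Set.univ → neg ψ ∈ Cn {φ})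
    (hA : ∀ φ : Fm, Cn {φ, neg φ} = Set.univ)
    (hWO : ∀ α φ ψ : Fm, (α, φ) ∈ N → ψ ∈ Cn {φ} → (α, ψ) ∈ N) :
    {p : Fm × Fm | ∀ ψ : Fm, (p.1, ψ) ∈ N → Cn {p.2, ψ} ≠ Set.univ} =
      {p : Fm × Fm | (p.1, neg p.2) ∉ N} := by
  ext ⟨α, φ⟩
  simp only [Set.mem_setOf_eq]
  constructor
  · intro h hn
    exact h (neg φ) hn (hA φ)
  · intro h ψ hψ hcn
    have : neg φ ∈ Cn {ψ} := hS ψ φ (by rwa [Set.pair_comm])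
    exact h (hWO α ψ (neg φ) hψ this)
end

section
/- Let N be a normative system closed under (SI) (if (β,φ) ∈ N and α ⊢ β then (α,φ) ∈ N), and let P_N := {(α, φ) | for all ψ, (α, ψ) ∈ N implies Cn({φ, ψ}) ≠ Fm}. Then the complement P_N^c of P_N is closed under the rule (SI)^▷: if (β, φ) ∉ P_N and α ⊢ β, then (α, φ) ∉ P_N. Moreover, without any assumption on N, P_N^c is closed under (WO)^▷: if (α, ψ) ∉ P_N and φ ⊢ ψ, then (α, φ) ∉ P_N. -/
/-- if N is closed under (SI), then P_N^c is closed under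
(SI)^▷; and (unconditionally) P_N^c is closed under (WO)^▷. -/
theorem stmt_17 {Fm : Type*} (Cn : Set Fm → Set Fm)
    (hext : ∀ Γ : Set Fm, Γ ⊆ Cn Γ)
    (hmono : ∀ Γ Δ : Set Fm, Γ ⊆ Δ → Cn Γ ⊆ Cn Δ)
    (hidem : ∀ Γ : Set Fm, Cn (Cn Γ) ⊆ Cn Γ)
    (N : Set (Fm × Fm))
    (hSI : ∀ α β φ : Fm, (β, φ) ∈ N → β ∈ Cn {α} → (α, φ) ∈ N) :
    (∀ α β φ : Fm,
        (β, φ) ∉ {p : Fm × Fm | ∀ ψ : Fm, (p.1, ψ) ∈ N → Cn {p.2, ψ} ≠ Set.univ} →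
        β ∈ Cn {α} →
        (α, φ) ∉ {p : Fm × Fm | ∀ ψ : Fm, (p.1, ψ) ∈ N → Cn {p.2, ψ} ≠ Set.univ}) ∧
    (∀ α φ ψ : Fm,
        (α, ψ) ∉ {p : Fm × Fm | ∀ χ : Fm, (p.1, χ) ∈ N → Cn {p.2, χ} ≠ Set.univ} →
        ψ ∈ Cn {φ} →
        (α, φ) ∉ {p : Fm × Fm | ∀ χ : Fm, (p.1, χ) ∈ N → Cn {p.2, χ} ≠ Set.univ}) := by
  constructor
  · intro α β φ hβ hαβ hmem
    apply hβ
    intro ψ hN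
    exact hmem ψ (hSI α β ψ hN hαβ)
  · intro α φ ψ hψ hφψ hmem
    apply hψ
    intro χ hN hcontra
    apply hmem χ hN
    apply Set.eq_univ_of_univ_subset
    rw [← hcontra]
    refine (hidem _).trans' (hmono _ _ ?_)
    intro x hx
    rcases hx with rfl | hx
    · exact hmono {φ} {φ, χ} (by simp) hφψ
    · exact hext _ (by simp [hx])
end

section
/- Let Cn be a consequence closure operator with the conjunction property and strong disjunction property, let N be a normative system closed under (AND) (if (α,φ) ∈ N and (α,ψ) ∈ N then (α, φ∧ψ) ∈ N), and let P_N := {(α, φ) | for all ψ, (α, ψ) ∈ N implies Cn({φ, ψ}) ≠ Fm}. Then P_N^c is closed under (AND)^▷: if (α, φ) ∉ P_N and (α, ψ) ∉ P_N, then (α, φ ∨ ψ) ∉ P_N. -/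
/-- with ∧_P, ∨_S and N closed under (AND), P_N^c is closed
under (AND)^▷. -/
theorem stmt_18 {Fm : Type*} (Cn : Set Fm → Set Fm)
    (hext : ∀ Γ : Set Fm, Γ ⊆ Cn Γ)
    (hmono : ∀ Γ Δ : Set Fm, Γ ⊆ Δ → Cn Γ ⊆ Cn Δ)
    (hidem : ∀ Γ : Set Fm, Cn (Cn Γ) ⊆ Cn Γ)
    (conj disj : Fm → Fm → Fm) (N : Set (Fm × Fm))
    (hconj : ∀ φ ψ : Fm, Cn {conj φ ψ} = Cn {φ, ψ})
    (hsdisj : ∀ (Γ : Set Fm) (φ ψ : Fm),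
      Cn (Γ ∪ {disj φ ψ}) = Cn (Γ ∪ {φ}) ∩ Cn (Γ ∪ {ψ}))
    (hAND : ∀ α φ ψ : Fm, (α, φ) ∈ N → (α, ψ) ∈ N → (α, conj φ ψ) ∈ N) :
    ∀ α φ ψ : Fm,
      (α, φ) ∉ {p : Fm × Fm | ∀ χ : Fm, (p.1, χ) ∈ N → Cn {p.2, χ} ≠ Set.univ} →
      (α, ψ) ∉ {p : Fm × Fm | ∀ χ : Fm, (p.1, χ) ∈ N → Cn {p.2, χ} ≠ Set.univ} →
      (α, disj φ ψ) ∉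
        {p : Fm × Fm | ∀ χ : Fm, (p.1, χ) ∈ N → Cn {p.2, χ} ≠ Set.univ} := by
  intro α φ ψ hφ hψ
  simp only [Set.mem_setOf_eq, not_forall, not_not] at hφ hψ ⊢
  obtain ⟨χ₁, hχ₁N, hχ₁⟩ := hφ
  obtain ⟨χ₂, hχ₂N, hχ₂⟩ := hψ
  refine ⟨conj χ₁ χ₂, hAND α χ₁ χ₂ hχ₁N hχ₂N, ?_⟩
  -- key: for θ ∈ {φ, ψ}, Cn {θ, conj χ₁ χ₂} = univ
  have key : ∀ (θ : Fm) (χ : Fm), χ ∈ ({χ₁, χ₂} : Set Fm) → Cn {θ, χ} = Set.univ →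
      Cn {θ, conj χ₁ χ₂} = Set.univ := by
    intro θ χ hχ h
    have hsub : ({θ, χ} : Set Fm) ⊆ Cn {θ, conj χ₁ χ₂} := by
      intro x hx
      rcases hx with rfl | rfl
      · exact hext _ (Or.inl rfl)
      · have : x ∈ Cn {conj χ₁ χ₂} := by
          rw [hconj]; exact hext _ hχ
        exact hmono _ _ (by intro y hy; exact Or.inr hy) this
    have := (hmono _ _ hsub).trans (hidem _)
    exact Set.eq_univ_of_univ_subset (h ▸ this)
  have h1 : Cn {φ, conj χ₁ χ₂} = Set.univ := key φ χ₁ (Or.inl rfl) hχ₁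
  have h2 : Cn {ψ, conj χ₁ χ₂} = Set.univ := key ψ χ₂ (Or.inr rfl) hχ₂
  have hpair : ∀ a b : Fm, ({a} : Set Fm) ∪ {b} = {b, a} := by
    intro a b; rw [Set.union_comm]; rfl
  have := hsdisj {conj χ₁ χ₂} φ ψ
  rw [hpair, hpair, hpair, h1, h2, Set.univ_inter] at this
  exact this
end
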